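/- Let α ∈ [0,1], β = √(1-α²), and |a⟩ = α|0⟩ + β|1⟩ in ℂ². Define operators Λ₀ = p|0⟩⟨0| and Λₐ = p|a⟩⟨a| for p > 0. Then the operator I − Λ₀ − Λₐ is positive semidefinite if and only if p ≤ 1/(1+α). -/

import Mathlib

/-!
The quadratic form of `I - Λ₀ - Λₐ` is `‖x‖² - p (|⟨0|x⟩|² + |⟨a|x⟩|²)`, and the Gram operator
`|0⟩⟨0| + |a⟩⟨a|` of two unit vectors with overlap `⟨0|a⟩ = α ≥ 0` has largest eigenvalue
`1 + α`, attained at `(1 + α, β)`. Hence the form is nonnegative exactly when `p (1 + α) ≤ 1`.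
-/

open scoped ComplexOrder

/-- Rank-one outer product `|v⟩⟨v|` as a matrix. -/
def outer {n : Type*} (v : n → ℂ) : Matrix n n ℂ := Matrix.of fun i j => v i * star (v j)

open Complex Matrix

lemma isHermitian_outer {n : Type*} [Fintype n] (v : n → ℂ) : (outer v).IsHermitian :=
  (posSemidef_vecMulVec_self_star v).isHermitian

lemma star_dotProduct_outer_mulVec {n : Type*} [Fintype n] (v x : n → ℂ) :
    star x ⬝ᵥ (outer v *ᵥ x) = (normSq (star v ⬝ᵥ x) : ℂ) := by
  rw [show outer v = vecMulVec v (star v) from rfl, vecMulVec_mulVec, dotProduct_smul,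
    op_smul_eq_mul, star_dotProduct, normSq_eq_conj_mul_self, starRingEnd_apply]

lemma normSq_add_normSq_le (α β : ℝ) (hα : 0 ≤ α) (hβ : β ^ 2 = 1 - α ^ 2) (z w : ℂ) :
    normSq z + normSq (α * z + β * w) ≤ (1 + α) * (normSq z + normSq w) := by
  have key : (1 + α) * ((1 + α) * (normSq z + normSq w) - normSq z - normSq (α * z + β * w))
      = α * normSq (β * z - (1 + α) * w) := by
    simp only [normSq_apply, add_re, add_im, mul_re, mul_im, sub_re, sub_im, ofReal_re,
      ofReal_im, one_re, one_im]
    linear_combination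
      (-(1 + α) * (w.re * w.re + w.im * w.im) - α * (z.re * z.re + z.im * z.im)) * hβ
  have hgap := (mul_nonneg_iff_of_pos_left (by linarith : 0 < 1 + α)).1
    (key ▸ mul_nonneg hα (normSq_nonneg _))
  linarith

lemma star_dotProduct_mulVec_one_sub_outer_sub_outer (α β p : ℝ) (x : Fin 2 → ℂ) :
    star x ⬝ᵥ ((1 - (p : ℂ) • outer ![1, 0] - (p : ℂ) • outer ![(α : ℂ), (β : ℂ)]) *ᵥ x)
      = ((normSq (x 0) + normSq (x 1)
          - p * (normSq (x 0) + normSq (α * x 0 + β * x 1)) : ℝ) : ℂ) := by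
  simp only [sub_mulVec, smul_mulVec, one_mulVec, dotProduct_sub, dotProduct_smul,
    star_dotProduct_outer_mulVec]
  simp [dotProduct, Fin.sum_univ_two, normSq_eq_conj_mul_self]
  ring

theorem stmt0 (α β p : ℝ) (hα0 : 0 ≤ α) (hα1 : α ≤ 1)
    (hβ : β = Real.sqrt (1 - α ^ 2)) (hp : 0 < p) :
    ((1 : Matrix (Fin 2) (Fin 2) ℂ) - (p : ℂ) • outer ![1, 0]
      - (p : ℂ) • outer ![(α : ℂ), (β : ℂ)]).PosSemidef ↔ p ≤ 1 / (1 + α) := by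
  have hβ2 : β ^ 2 = 1 - α ^ 2 := by rw [hβ, Real.sq_sqrt (by nlinarith)]
  have hHerm : ((1 : Matrix (Fin 2) (Fin 2) ℂ) - (p : ℂ) • outer ![1, 0]
      - (p : ℂ) • outer ![(α : ℂ), (β : ℂ)]).IsHermitian :=
    (isHermitian_one.sub ((isHermitian_outer _).smul (conj_ofReal p))).sub
      ((isHermitian_outer _).smul (conj_ofReal p))
  rw [posSemidef_iff_dotProduct_mulVec, le_div_iff₀ (by linarith), ← sub_nonneg]
  simp only [hHerm, true_and, star_dotProduct_mulVec_one_sub_outer_sub_outer, zero_le_real]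
  constructor
  · intro h
    -- on this top eigenvector the form equals `2 (1 + α) (1 - p (1 + α))`
    have h_eig := h ![(1 + α : ℝ), β]
    simp only [cons_val_zero, cons_val_one, ← ofReal_mul, ← ofReal_add, normSq_ofReal] at h_eig
    nlinarith
  · intro h x
    have hGram := mul_le_mul_of_nonneg_left
      (normSq_add_normSq_le α β hα0 hβ2 (x 0) (x 1)) hp.le
    linarith [mul_nonneg h (add_nonneg (normSq_nonneg (x 0)) (normSq_nonneg (x 1)))]
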